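/- Let (C_n, p) be a framework on a cycle with points p(v₁),…,p(vₙ) ∈ S¹ such that p(v₁) = p(v₂) and p(v₃),…,p(vₙ) are distinct points in order on the minor arc between p(v₂) and p(vₙ), with p(v₁), p(v₃) linearly independent. If ω is an equilibrium stress of (C_n, p), then ω(vᵢ v_{i+1}) = 0 for all 2 ≤ i ≤ n−1. -/

import Mathlib

open Matrix

private lemma circle_indep (a b x y : ℝ) (h : Real.sin (y - x) ≠ 0)
    (h1 : a * Real.cos x + b * Real.cos y = 0)
    (h2 : a * Real.sin x + b * Real.sin y = 0) : a = 0 ∧ b = 0 := by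
  rw [Real.sin_sub] at h
  constructor
  · have ha : a * (Real.sin y * Real.cos x - Real.cos y * Real.sin x) = 0 := by
      linear_combination Real.sin y * h1 - Real.cos y * h2
    rcases mul_eq_zero.mp ha with h' | h'
    · exact h'
    · exact absurd h' h
  · have hb : b * (Real.sin y * Real.cos x - Real.cos y * Real.sin x) = 0 := by
      linear_combination Real.cos x * h2 - Real.sin x * h1
    rcases mul_eq_zero.mp hb with h' | h'
    · exact h'
    · exact absurd h' h

theorem equilibrium_stress_vanishes_on_path {n : ℕ} (hn : 4 ≤ n)
    (C : SimpleGraph (Fin n)) (hC : C = SimpleGraph.cycleGraph n)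
    (p : Fin n → (Fin 2 → ℝ)) (θ : Fin n → ℝ)
    -- the points lie on the unit circle `S¹`,
    (hp : ∀ i, p i = fun a => if a = 0 then Real.cos (θ i) else Real.sin (θ i))
    -- `p(v₁) = p(v₂)`,
    (h01 : θ ⟨0, by omega⟩ = θ ⟨1, by omega⟩)
    -- and `p(v₃), …, p(vₙ)` are distinct points, in order, on the minor arc
    -- between `p(v₂)` and `p(vₙ)`:
    (hord : ∀ i j : Fin n, 1 ≤ (i : ℕ) → i < j → θ i < θ j)
    (harc : θ ⟨n - 1, by omega⟩ - θ ⟨1, by omega⟩ < Real.pi)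
    -- `ω` is an equilibrium stress of `(Cₙ, p)`, encoded by its stress matrix `Ω`:
    (Ω : Matrix (Fin n) (Fin n) ℝ) (hsym : Ω.IsSymm)
    (hsupp : ∀ i j, i ≠ j → ¬ C.Adj i j → Ω i j = 0)
    (heq : ∀ i a, ∑ j, Ω i j * p j a = 0) :
    -- then the stress vanishes on every edge `vᵢv_{i+1}` with `2 ≤ i ≤ n - 1`.
    ∀ i j : Fin n, C.Adj i j → i ≠ ⟨0, by omega⟩ → j ≠ ⟨0, by omega⟩ → Ω i j = 0 := by
  have hnz : NeZero n := ⟨by omega⟩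
  letI : CommRing (Fin n) := Fin.instCommRing n
  have hone : (1 : Fin n).val = 1 := by
    rw [Fin.val_one', Nat.mod_eq_of_lt (by omega)]
  -- adjacency characterization
  have hadj : ∀ u v : Fin n, C.Adj u v ↔ u = v + 1 ∨ v = u + 1 := by
    intro u v
    rw [hC, SimpleGraph.cycleGraph_adj']
    constructor
    · rintro (h | h)
      · left
        have h' : u - v = 1 := Fin.ext (by rw [h, hone])
        linear_combination h'
      · right
        have h' : v - u = 1 := Fin.ext (by rw [h, hone])
        linear_combination h'
    · rintro (h | h)
      · left
        have h' : u - v = 1 := by linear_combination h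
        rw [h', hone]
      · right
        have h' : v - u = 1 := by linear_combination h
        rw [h', hone]
  -- monotonicity (≤ version)
  have hmono : ∀ i j : Fin n, 1 ≤ (i : ℕ) → i ≤ j → θ i ≤ θ j := by
    intro i j h1 hij
    rcases eq_or_lt_of_le hij with h | h
    · rw [h]
    · exact (hord i j h1 h).le
  -- three-term reduction of the equilibrium equation at an interior vertex
  have hred : ∀ (k : ℕ) (hk1 : 1 ≤ k) (hk2 : k ≤ n - 2) (a : Fin 2),
      Ω ⟨k, by omega⟩ ⟨k - 1, by omega⟩ * p ⟨k - 1, by omega⟩ a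
        + Ω ⟨k, by omega⟩ ⟨k, by omega⟩ * p ⟨k, by omega⟩ a
        + Ω ⟨k, by omega⟩ ⟨k + 1, by omega⟩ * p ⟨k + 1, by omega⟩ a = 0 := by
    intro k hk1 hk2 a
    set i : Fin n := ⟨k, by omega⟩ with hi
    set im : Fin n := ⟨k - 1, by omega⟩ with him
    set ip : Fin n := ⟨k + 1, by omega⟩ with hip
    have himi : im + 1 = i := by
      apply Fin.ext
      rw [Fin.val_add, hone]
      show (k - 1 + 1) % n = k
      rw [Nat.mod_eq_of_lt (by omega)]
      omega
    have hipi : i + 1 = ip := by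
      apply Fin.ext
      rw [Fin.val_add, hone]
      show (k + 1) % n = k + 1
      rw [Nat.mod_eq_of_lt (by omega)]
    have hne1 : im ≠ i := by
      simp only [him, hi, ne_eq, Fin.mk.injEq]
      omega
    have hne2 : i ≠ ip := by
      simp only [hip, hi, ne_eq, Fin.mk.injEq]
      omega
    have hne3 : im ≠ ip := by
      simp only [him, hip, ne_eq, Fin.mk.injEq]
      omega
    have hsum : ∑ j, Ω i j * p j a
        = ∑ j ∈ ({im, i, ip} : Finset (Fin n)), Ω i j * p j a := by
      symm
      apply Finset.sum_subset (Finset.subset_univ _)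
      intro j _ hj
      simp only [Finset.mem_insert, Finset.mem_singleton, not_or] at hj
      obtain ⟨hjm, hji, hjp⟩ := hj
      have hΩ : Ω i j = 0 := by
        apply hsupp i j (Ne.symm hji)
        rw [hadj]
        rintro (h | h)
        · exact hjm (by linear_combination -himi - h)
        · exact hjp (h.trans hipi)
      rw [hΩ, zero_mul]
    have htot := heq i a
    rw [hsum] at htot
    rw [Finset.sum_insert (by simp [hne1, hne3]),
      Finset.sum_insert (by simp [hne2]), Finset.sum_singleton] at htot
    linarith [htot]
  -- sine of angle differences is nonzero
  have hsin : ∀ (k : ℕ) (hk1 : 1 ≤ k) (hk2 : k ≤ n - 2),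
      Real.sin (θ ⟨k + 1, by omega⟩ - θ ⟨k, by omega⟩) ≠ 0 := by
    intro k hk1 hk2
    apply ne_of_gt
    apply Real.sin_pos_of_pos_of_lt_pi
    · have := hord ⟨k, by omega⟩ ⟨k + 1, by omega⟩ hk1 (by simp [Fin.lt_def])
      linarith
    · have h1 : θ ⟨1, by omega⟩ ≤ θ ⟨k, by omega⟩ := by
        apply hmono
        · show (1 : ℕ) ≤ 1
          exact le_refl 1
        · simp only [Fin.mk_le_mk]
          omega
      have h2 : θ ⟨k + 1, by omega⟩ ≤ θ ⟨n - 1, by omega⟩ := by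
        apply hmono
        · show 1 ≤ k + 1
          omega
        · simp only [Fin.mk_le_mk]
          omega
      linarith
  -- main induction: stresses on the path vanish
  have main : ∀ (k : ℕ) (hk1 : 1 ≤ k) (hk2 : k ≤ n - 2),
      Ω ⟨k, by omega⟩ ⟨k + 1, by omega⟩ = 0 := by
    intro k
    induction k with
    | zero => omega
    | succ m ih =>
      intro hk1 hk2
      rcases Nat.eq_zero_or_pos m with rfl | hm
      · -- base case: vertex 1, using θ 0 = θ 1
        have e0 := hred 1 (le_refl 1) (by omega) 0
        have e1 := hred 1 (le_refl 1) (by omega) 1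
        simp only [hp] at e0 e1
        norm_num at e0 e1
        have h0 : (0 : Fin n) = ⟨0, by omega⟩ := Fin.ext (by simp)
        rw [h0, h01] at e0 e1
        have hres := circle_indep
          (Ω ⟨1, by omega⟩ ⟨0, by omega⟩ + Ω ⟨1, by omega⟩ ⟨1, by omega⟩)
          (Ω ⟨1, by omega⟩ ⟨2, by omega⟩)
          (θ ⟨1, by omega⟩) (θ ⟨2, by omega⟩)
          (hsin 1 (le_refl 1) (by omega)) (by linarith) (by linarith)
        exact hres.2
      · -- inductive step: previous stress vanishes
        have e0 := hred (m + 1) hk1 hk2 0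
        have e1 := hred (m + 1) hk1 hk2 1
        simp only [hp] at e0 e1
        norm_num at e0 e1
        have hprev : Ω ⟨m + 1, by omega⟩ ⟨m, by omega⟩ = 0 :=
          (hsym.apply ⟨m, by omega⟩ ⟨m + 1, by omega⟩).trans (ih hm (by omega))
        rw [hprev, zero_mul, zero_add] at e0 e1
        have hres := circle_indep
          (Ω ⟨m + 1, by omega⟩ ⟨m + 1, by omega⟩)
          (Ω ⟨m + 1, by omega⟩ ⟨m + 1 + 1, by omega⟩)
          (θ ⟨m + 1, by omega⟩) (θ ⟨m + 1 + 1, by omega⟩)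
          (hsin (m + 1) hk1 hk2) (by linarith) (by linarith)
        exact hres.2
  -- conclusion
  intro i j hij hi hj
  rw [hadj] at hij
  have hi0 : i.val ≠ 0 := fun h => hi (Fin.ext h)
  have hj0 : j.val ≠ 0 := fun h => hj (Fin.ext h)
  rcases hij with h | h
  · -- i = j + 1
    have hval : i.val = (j.val + 1) % n := by
      rw [h, Fin.val_add, hone]
    have hjn : j.val ≠ n - 1 := by
      intro hc
      apply hi0
      rw [hval, hc]
      have : n - 1 + 1 = n := by omega
      rw [this, Nat.mod_self]
    have hval' : i.val = j.val + 1 := by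
      rw [hval, Nat.mod_eq_of_lt (by omega)]
    have hkey := main j.val (by omega) (by omega)
    have hje : (⟨j.val, by omega⟩ : Fin n) = j := Fin.ext rfl
    have hie : (⟨j.val + 1, by omega⟩ : Fin n) = i := by
      apply Fin.ext
      show j.val + 1 = i.val
      omega
    rw [hje, hie] at hkey
    rw [← hsym.apply]
    exact hkey
  · -- j = i + 1
    have hval : j.val = (i.val + 1) % n := by
      rw [h, Fin.val_add, hone]
    have hin : i.val ≠ n - 1 := by
      intro hc
      apply hj0
      rw [hval, hc]
      have : n - 1 + 1 = n := by omega
      rw [this, Nat.mod_self]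
    have hval' : j.val = i.val + 1 := by
      rw [hval, Nat.mod_eq_of_lt (by omega)]
    have hkey := main i.val (by omega) (by omega)
    have hie : (⟨i.val, by omega⟩ : Fin n) = i := Fin.ext rfl
    have hje : (⟨i.val + 1, by omega⟩ : Fin n) = j := by
      apply Fin.ext
      show i.val + 1 = j.val
      omega
    rw [hie, hje] at hkey
    exact hkey
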